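/- Existence of optimal envy-free prices (Sun–Yang; alternate constructive proof via Theorem 3.5): For every rent-division instance satisfying the standing assumptions there exists an envy-free solution (π*, p*) with p* r ≥ 0 for all rooms r such that for every envy-free solution (σ, q) with q r ≥ 0 for all rooms r, one has p* r ≤ q r for every room r. -/

import Mathlib

/-- A function `f : ℝ → ℝ` is piecewise linear: there are finitely many
breakpoints `b 0 < … < b t` such that `f` is affine on `(-∞, b 0]`, on each
`[b i, b (i+1)]`, and on `[b t, ∞)`. -/
def PiecewiseLinear (f : ℝ → ℝ) : Prop :=
  ∃ (t : ℕ) (b : Fin (t + 1) → ℝ), StrictMono b ∧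
    (∃ m c : ℝ, ∀ x ≤ b 0, f x = m * x + c) ∧
    (∀ i : Fin t, ∃ m c : ℝ,
      ∀ x ∈ Set.Icc (b i.castSucc) (b i.succ), f x = m * x + c) ∧
    (∃ m c : ℝ, ∀ x, b (Fin.last t) ≤ x → f x = m * x + c)

/-!
An ascending auction with bid increment `δ`, in which an unassigned agent takes a favourite room
at its current price plus `δ`, must stop because prices stay bounded; it ends in a nonnegative
solution that is envy-free up to `δ`. As `δ → 0` a limit of these is envy-free, since for each of
the finitely many assignments the envy-freeness condition is closed.

The envy-free price vectors are closed under componentwise minimum: agents who are strictly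
better off under the second vector keep their room from its assignment, the others keep theirs
from the first, and strict monotonicity of the utilities makes this a permutation. So the
nonnegative envy-free price vectors form a nonempty closed set, bounded below and closed under
`⊓`, and such a set contains its infimum.
-/

open Filter Topology Function

theorem PiecewiseLinear.tendsto_atBot {f : ℝ → ℝ} (hpl : PiecewiseLinear f) (hf : StrictAnti f) :
    Tendsto f atTop atBot := by
  obtain ⟨t, b, -, -, -, m, c, htail⟩ := hpl
  have hm : m < 0 := by
    have := hf (lt_add_one (b (Fin.last t)))
    rw [htail _ le_rfl, htail _ (le_add_of_nonneg_right zero_le_one)] at this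
    linarith
  refine (tendsto_atBot_add_const_right _ c (tendsto_id.const_mul_atTop_of_neg hm)).congr' ?_
  filter_upwards [eventually_ge_atTop (b (Fin.last t))] with x hx
  exact (htail x hx).symm

theorem IsGLB.mem_of_isClosed_of_infClosed {α : Type*} [SemilatticeInf α] [TopologicalSpace α]
    [InfConvergenceClass α] {s : Set α} {a : α} (ha : IsGLB s a) (hne : s.Nonempty)
    (hinf : InfClosed s) (hc : IsClosed s) : a ∈ s := by
  have : Nonempty s := hne.to_subtype
  have : IsCodirectedOrder s := hinf.codirectedOn.isCodirectedOrder
  exact hc.mem_of_tendsto (InfConvergenceClass.tendsto_coe_atBot_isGLB a s ha)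
    (Eventually.of_forall Subtype.prop)

theorem isClosed_setOf_exists_perm_forall_le {ι X : Type*} [Finite ι] [TopologicalSpace X]
    {f g : ι → ι → X → ℝ} (hf : ∀ a r, Continuous (f a r)) (hg : ∀ a r, Continuous (g a r)) :
    IsClosed {x | ∃ π : Equiv.Perm ι, ∀ a r, f a r x ≤ g a (π a) x} := by
  simp only [Set.ofPred_exists, Set.ofPred_forall]
  exact isClosed_iUnion_of_finite fun π ↦ isClosed_iInter fun a ↦ isClosed_iInter fun r ↦
    isClosed_le (hf a r) (hg a (π a))

section IsEnvyFree

variable {ι : Type*} {v : ι → ι → ℝ → ℝ}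

def IsEnvyFree (v : ι → ι → ℝ → ℝ) (π : Equiv.Perm ι) (p : ι → ℝ) : Prop :=
  ∀ a r, v a r (p r) ≤ v a (π a) (p (π a))

def envyFreePrices (v : ι → ι → ℝ → ℝ) : Set (ι → ℝ) :=
  {p | ∃ π, IsEnvyFree v π p}

theorem isClosed_envyFreePrices [Finite ι] (hv : ∀ a r, Continuous (v a r)) :
    IsClosed (envyFreePrices v) :=
  isClosed_setOf_exists_perm_forall_le (fun a r ↦ (hv a r).comp (continuous_apply r))
    (fun a r ↦ (hv a r).comp (continuous_apply r))

theorem IsEnvyFree.exists_inf [Finite ι] (hv : ∀ a r, StrictAnti (v a r)) {σ τ : Equiv.Perm ι}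
    {q q' : ι → ℝ} (hq : IsEnvyFree v σ q) (hq' : IsEnvyFree v τ q') :
    ∃ π, IsEnvyFree v π (q ⊓ q') := by
  classical
  set A := {a | v a (σ a) (q (σ a)) < v a (τ a) (q' (τ a))}
  have hlt {a} (ha : a ∈ A) : q' (τ a) < q (τ a) :=
    (hv a (τ a)).lt_iff_gt.1 ((hq a (τ a)).trans_lt ha)
  have hmem {a b} (ha : a ∈ A) (hb : σ b = τ a) : b ∈ A := by
    show v b (σ b) (q (σ b)) < _
    rw [hb]
    exact (hv b (τ a) (hlt ha)).trans_le (hq' b (τ a))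
  have hinj : Injective (A.piecewise τ σ) := (Set.injective_piecewise_iff A).2
    ⟨τ.injective.injOn, σ.injective.injOn, fun a ha b hb hab ↦ hb (hmem ha hab.symm)⟩
  refine ⟨Equiv.ofBijective _ (Finite.injective_iff_bijective.1 hinj), fun a r ↦ ?_⟩
  have hmax : v a r ((q ⊓ q') r) ≤ max (v a (σ a) (q (σ a))) (v a (τ a) (q' (τ a))) := by
    rw [Pi.inf_apply, (hv a r).antitone.map_min]
    exact max_le_max (hq a r) (hq' a r)
  refine hmax.trans ?_
  simp only [Equiv.ofBijective_apply, Pi.inf_apply]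
  by_cases ha : a ∈ A
  · rw [Set.piecewise_eq_of_mem _ _ _ ha, min_eq_right (hlt ha).le, max_eq_right ha.le]
  · rw [Set.piecewise_eq_of_notMem _ _ _ ha, max_eq_left (not_lt.1 ha)]
    exact (hv a (σ a)).antitone inf_le_left

theorem infClosed_envyFreePrices [Finite ι] (hv : ∀ a r, StrictAnti (v a r)) :
    InfClosed (envyFreePrices v) := fun _ ⟨_, hq⟩ _ ⟨_, hq'⟩ ↦ hq.exists_inf hv hq'

end IsEnvyFree

theorem exists_forall_ne_some_of_eq_none {ι : Type*} [Finite ι] {owner : ι → Option ι}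
    {r₀ : ι} (hr₀ : owner r₀ = none) : ∃ a, ∀ r, owner r ≠ some a := by
  by_contra! h
  choose g hg using h
  have hg_inj : Injective g := fun a b hab ↦ Option.some_injective _ <| by
    rw [← hg a, ← hg b, hab]
  obtain ⟨a, rfl⟩ := (Finite.injective_iff_surjective.1 hg_inj) r₀
  simp [hg] at hr₀

section Auction

variable {ι : Type*} {v : ι → ι → ℝ → ℝ} {δ B : ℝ} {p : ι → ℝ} {owner : ι → Option ι}

/-- A state of the ascending auction with bid increment `δ`: `owner r` is the agent currently
holding room `r`, and `B` bounds the prices. -/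
structure IsAuctionState (v : ι → ι → ℝ → ℝ) (δ B : ℝ) (p : ι → ℝ) (owner : ι → Option ι) :
    Prop where
  owner_inj : ∀ r r' a, owner r = some a → owner r' = some a → r = r'
  price_eq_zero : ∀ r, owner r = none → p r = 0
  nonneg : ∀ r, 0 ≤ p r
  le_bound : ∀ r, p r ≤ B
  le_of_owner_eq : ∀ r a, owner r = some a → ∀ r', v a r' (p r' + δ) ≤ v a r (p r)

theorem isAuctionState_init (hB : ∀ a r r' x, v a r' 1 ≤ v a r x → x ≤ B) :
    IsAuctionState v δ B 0 fun _ ↦ none where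
  owner_inj := by simp
  price_eq_zero _ _ := rfl
  nonneg _ := le_rfl
  le_bound r := zero_le_one.trans (hB r r r 1 le_rfl)
  le_of_owner_eq := by simp

theorem IsAuctionState.exists_perm [Finite ι] (hs : IsAuctionState v δ B p owner)
    (hfull : ∀ r, owner r ≠ none) :
    ∃ π : Equiv.Perm ι, ∀ a r, v a r (p r + δ) ≤ v a (π a) (p (π a)) := by
  choose f hf using fun r ↦ Option.ne_none_iff_exists'.1 (hfull r)
  have hf_inj : Injective f := fun r r' h ↦ hs.owner_inj r r' (f r) (hf r) (h ▸ hf r')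
  set e := Equiv.ofBijective f (Finite.injective_iff_bijective.1 hf_inj)
  refine ⟨e.symm, fun a r ↦ hs.le_of_owner_eq _ a ?_ r⟩
  exact (hf (e.symm a)).trans (congrArg some (e.apply_symm_apply a))

variable [Fintype ι] [DecidableEq ι]

theorem IsAuctionState.exists_step (hv : ∀ a r, Antitone (v a r)) (hδ : 0 < δ) (hδ₁ : δ ≤ 1)
    (hB : ∀ a r r' x, v a r' 1 ≤ v a r x → x ≤ B) (hs : IsAuctionState v δ B p owner) {r₀ : ι}
    (hr₀ : owner r₀ = none) :
    ∃ p' owner', IsAuctionState v δ B p' owner' ∧ ∑ r, p' r = ∑ r, p r + δ := by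
  obtain ⟨a, ha⟩ := exists_forall_ne_some_of_eq_none hr₀
  have : Nonempty ι := ⟨r₀⟩
  -- the unassigned agent `a` outbids the holder of a favourite room `rB`
  obtain ⟨rB, hrB⟩ := Finite.exists_max fun r ↦ v a r (p r + δ)
  set p' := p + Pi.single rB δ
  set owner' := update owner rB (some a)
  have hp' : p ≤ p' := le_add_of_nonneg_right (Pi.single_nonneg.2 hδ.le)
  have hp'_of_ne {r} (hr : r ≠ rB) : p' r = p r := by simp [p', hr]
  have hp'_rB : p' rB = p rB + δ := by simp [p']
  refine ⟨p', owner', ⟨?_, ?_, ?_, ?_, ?_⟩, by simp [p', Finset.sum_add_distrib]⟩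
  · intro r r' b hr hr'
    simp only [owner', update_apply] at hr hr'
    split_ifs at hr hr' with h h'
    · exact h.trans h'.symm
    · cases hr; exact absurd hr' (ha r')
    · cases hr'; exact absurd hr (ha r)
    · exact hs.owner_inj r r' b hr hr'
  · intro r hr
    have hne : r ≠ rB := by rintro rfl; simp [owner'] at hr
    simp only [owner', update_of_ne hne] at hr
    rw [hp'_of_ne hne, hs.price_eq_zero r hr]
  · exact fun r ↦ (hs.nonneg r).trans (hp' r)
  · intro r
    by_cases hr : r = rB
    · subst hr
      refine hp'_rB ▸ hB a r r₀ _ ?_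
      calc v a r₀ 1 ≤ v a r₀ (p r₀ + δ) := hv a r₀ (by rw [hs.price_eq_zero r₀ hr₀]; linarith)
        _ ≤ v a r (p r + δ) := hrB r₀
    · exact (hp'_of_ne hr).trans_le (hs.le_bound r)
  · intro r b hr r'
    have hr' : v b r' (p' r' + δ) ≤ v b r' (p r' + δ) := hv b r' (by linarith [hp' r'])
    by_cases hrB : r = rB
    · subst hrB
      obtain rfl : a = b := by simpa [owner'] using hr
      exact hr'.trans (hp'_rB ▸ hrB r')
    · simp only [owner', update_of_ne hrB] at hr
      exact hr'.trans ((hp'_of_ne hrB).symm ▸ hs.le_of_owner_eq r b hr r')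

theorem IsAuctionState.exists_forall_ne_none (hv : ∀ a r, Antitone (v a r)) (hδ : 0 < δ)
    (hδ₁ : δ ≤ 1) (hB : ∀ a r r' x, v a r' 1 ≤ v a r x → x ≤ B)
    (hs : IsAuctionState v δ B p owner) :
    ∃ p' owner', IsAuctionState v δ B p' owner' ∧ ∀ r, owner' r ≠ none := by
  -- each bid raises the total price by `δ`, and the total price stays below `card ι * B`
  suffices key : ∀ N : ℕ, ∀ p owner, IsAuctionState v δ B p owner →
      Fintype.card ι * B < ∑ r, p r + N * δ →
      ∃ p' owner', IsAuctionState v δ B p' owner' ∧ ∀ r, owner' r ≠ none by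
    obtain ⟨N, hN⟩ := exists_nat_gt (Fintype.card ι * B / δ)
    refine key N p owner hs ?_
    have : 0 ≤ ∑ r, p r := Finset.sum_nonneg fun r _ ↦ hs.nonneg r
    rw [div_lt_iff₀ hδ] at hN
    linarith
  intro N
  induction N with
  | zero =>
    intro p owner hs hlt
    have := Finset.sum_le_card_nsmul Finset.univ p B fun r _ ↦ hs.le_bound r
    simp only [Finset.card_univ, nsmul_eq_mul] at this
    simp only [CharP.cast_eq_zero, zero_mul, add_zero] at hlt
    linarith
  | succ N ih =>
    intro p owner hs hlt
    by_cases hfull : ∀ r, owner r ≠ none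
    · exact ⟨p, owner, hs, hfull⟩
    obtain ⟨r₀, hr₀⟩ := not_forall_not.1 hfull
    obtain ⟨p', owner', hs', hsum⟩ := hs.exists_step hv hδ hδ₁ hB hr₀
    refine ih p' owner' hs' ?_
    rw [hsum]
    push_cast at hlt
    linarith

end Auction

theorem exists_price_bound {ι : Type*} [Finite ι] {v : ι → ι → ℝ → ℝ}
    (hv : ∀ a r, Tendsto (v a r) atTop atBot) :
    ∃ B, ∀ a r r' x, v a r' 1 ≤ v a r x → x ≤ B := by
  have : ∀ᶠ x in atTop, ∀ a r r', v a r x < v a r' 1 := by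
    simp only [eventually_all]
    exact fun a r r' ↦ (hv a r).eventually_lt_atBot _
  obtain ⟨B, hB⟩ := this.exists_forall_of_atTop
  refine ⟨B, fun a r r' x hx ↦ ?_⟩
  by_contra! hBx
  exact (hB x hBx.le a r r').not_ge hx

theorem exists_nonneg_envyFree {ι : Type*} [Fintype ι] {v : ι → ι → ℝ → ℝ}
    (hcont : ∀ a r, Continuous (v a r)) (hanti : ∀ a r, Antitone (v a r))
    (hlim : ∀ a r, Tendsto (v a r) atTop atBot) :
    ∃ π p, 0 ≤ p ∧ IsEnvyFree v π p := by
  classical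
  obtain ⟨B, hB⟩ := exists_price_bound hlim
  set C := {x : ℝ × (ι → ℝ) |
    ∃ π : Equiv.Perm ι, ∀ a r, v a r (x.2 r + x.1) ≤ v a (π a) (x.2 (π a))}
  have hC : IsClosed C := isClosed_setOf_exists_perm_forall_le
    (X := ℝ × (ι → ℝ)) (f := fun a r x ↦ v a r (x.2 r + x.1)) (g := fun a r x ↦ v a r (x.2 r))
    (fun a r ↦ (hcont a r).comp (by fun_prop)) (fun a r ↦ (hcont a r).comp (by fun_prop))
  have happrox (k : ℕ) : ∃ p ∈ Set.Icc 0 fun _ ↦ B, ((1 : ℝ) / (k + 1), p) ∈ C := by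
    have hδ : (0 : ℝ) < 1 / (k + 1) := by positivity
    have hδ₁ : (1 : ℝ) / (k + 1) ≤ 1 :=
      div_le_one_of_le₀ (le_add_of_nonneg_left k.cast_nonneg) (by positivity)
    obtain ⟨p, owner, hs, hfull⟩ :=
      (isAuctionState_init hB).exists_forall_ne_none hanti hδ hδ₁ hB
    exact ⟨p, ⟨hs.nonneg, hs.le_bound⟩, hs.exists_perm hfull⟩
  choose p hpB hpC using happrox
  obtain ⟨q, hq, φ, hφ, hpq⟩ := isCompact_Icc.tendsto_subseq hpB
  have hδ : Tendsto (fun k ↦ (1 : ℝ) / (φ k + 1)) atTop (𝓝 0) :=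
    tendsto_one_div_add_atTop_nhds_zero_nat.comp hφ.tendsto_atTop
  obtain ⟨π, hπ⟩ :=
    hC.mem_of_tendsto (hδ.prodMk_nhds hpq) (Eventually.of_forall fun k ↦ hpC (φ k))
  exact ⟨π, q, hq.1, fun a r ↦ by simpa using hπ a r⟩

theorem exists_optimal_envy_free_prices_general
    (n : ℕ) (v : Fin n → Fin n → ℝ → ℝ)
    (hcont : ∀ a r, Continuous (v a r))
    (hanti : ∀ a r, StrictAnti (v a r))
    (hpl : ∀ a r, PiecewiseLinear (v a r)) :
    ∃ (πs : Equiv.Perm (Fin n)) (ps : Fin n → ℝ),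
      (∀ a r, v a r (ps r) ≤ v a (πs a) (ps (πs a))) ∧
      (∀ r, 0 ≤ ps r) ∧
      ∀ (σ : Equiv.Perm (Fin n)) (q : Fin n → ℝ),
        (∀ a r, v a r (q r) ≤ v a (σ a) (q (σ a))) →
        (∀ r, 0 ≤ q r) →
        ∀ r, ps r ≤ q r := by
  set Q := Set.Ici 0 ∩ envyFreePrices v
  obtain ⟨π₀, p₀, hp₀, hπ₀⟩ := exists_nonneg_envyFree hcont (fun a r ↦ (hanti a r).antitone)
    fun a r ↦ (hpl a r).tendsto_atBot (hanti a r)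
  have hQ : Q.Nonempty := ⟨p₀, hp₀, π₀, hπ₀⟩
  have hglb : IsGLB Q (sInf Q) := isGLB_csInf hQ ⟨0, fun _ hp ↦ hp.1⟩
  have hIci : InfClosed (Set.Ici (0 : Fin n → ℝ)) := fun _ hx _ hy ↦ Set.mem_Ici.2 (le_inf hx hy)
  obtain ⟨hps, π, hπ⟩ := hglb.mem_of_isClosed_of_infClosed hQ
    (hIci.inter (infClosed_envyFreePrices hanti))
    (isClosed_Ici.inter (isClosed_envyFreePrices hcont))
  exact ⟨π, sInf Q, hπ, hps, fun σ q hq hq₀ ↦ hglb.1 ⟨hq₀, σ, hq⟩⟩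

/-- Existence of optimal envy-free prices (Sun–Yang): there is an envy-free
solution with nonnegative prices whose price vector is componentwise minimal
among all nonnegative envy-free price vectors. -/
theorem exists_optimal_envy_free_prices
    (n : ℕ) (v : Fin n → Fin n → ℝ → ℝ)
    (hcont : ∀ a r, Continuous (v a r))
    (hanti : ∀ a r, StrictAnti (v a r))
    (hpl : ∀ a r, PiecewiseLinear (v a r))
    (hnonneg : ∀ a r, 0 ≤ v a r 0) :
    ∃ (πs : Equiv.Perm (Fin n)) (ps : Fin n → ℝ),
      (∀ a r, v a r (ps r) ≤ v a (πs a) (ps (πs a))) ∧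
      (∀ r, 0 ≤ ps r) ∧
      ∀ (σ : Equiv.Perm (Fin n)) (q : Fin n → ℝ),
        (∀ a r, v a r (q r) ≤ v a (σ a) (q (σ a))) →
        (∀ r, 0 ≤ q r) →
        ∀ r, ps r ≤ q r :=
  exists_optimal_envy_free_prices_general n v hcont hanti hpl
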